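/- arXiv:2107.04801 — 13 statements merged into one kernel-verified Lean document; each statement's English description precedes it below -/
import Mathlib

section
/- Let X be a set with a binary operation ·. Then the identity (y·x)·(x·(y·x)) = y holds for all x,y ∈ X if and only if the identity (x·(y·x))·y = x holds for all x,y ∈ X. -/
/-- For a binary operation · on X, the identity (y·x)·(x·(y·x)) = y holds
for all x,y iff the identity (x·(y·x))·y = x holds for all x,y. -/
theorem stmt_1 {X : Type*} (mul : X → X → X) :
    (∀ x y : X, mul (mul y x) (mul x (mul y x)) = y) ↔
    (∀ x y : X, mul (mul x (mul y x)) y = x) := by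
  constructor
  · intro h x y
    have h1 := h (mul y x) x
    rw [h x y] at h1
    exact h1
  · intro h x y
    have h1 := h y (mul x (mul y x))
    rw [h x y] at h1
    exact h1
end

section
/- Let X be a set with a binary operation · satisfying (x·(y·x))·y = x for all x,y ∈ X. Then every right translation R_y : x ↦ x·y is bijective, with inverse given by x ↦ x·(y·x); consequently (X,·) is a right quasigroup whose right division is x/y = x·(y·x). -/
/-- If · satisfies (x·(y·x))·y = x, then each right translation R_y is bijective
with inverse x ↦ x·(y·x); hence (X,·) is a right quasigroup with right division
x/y = x·(y·x). -/
theorem stmt_2 {X : Type*} (mul : X → X → X)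
    (h : ∀ x y : X, mul (mul x (mul y x)) y = x) :
    ∀ y : X, Function.Bijective (fun x => mul x y) ∧
      (∀ x : X, mul (mul x y) (mul y (mul x y)) = x) ∧
      (∀ x : X, mul (mul x (mul y x)) y = x) := by
  have key : ∀ x y : X, mul (mul x y) (mul y (mul x y)) = x := by
    intro x y
    have hz : mul (mul y (mul x y)) x = y := h y x
    have h2 := h x (mul y (mul x y))
    rw [hz] at h2
    exact h2
  intro y
  refine ⟨?_, fun x => key x y, fun x => h x y⟩
  rw [Function.bijective_iff_has_inverse]
  exact ⟨fun x => mul x (mul y x), fun x => key x y, fun x => h x y⟩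
end

section
/- Let (X,·,/) be a right quasigroup and define φ : X × X → X × X by φ(x,y) = (x·y, y/x). Then φ ∘ φ = id (φ is an involution) if and only if (X,·,/) is an S-right quasigroup, i.e., x/y = x·(y·x) holds for all x,y ∈ X. -/
/-- For a right quasigroup (X,·,/), the map φ(x,y) = (x·y, y/x) is an involution
iff (X,·,/) is an S-right quasigroup, i.e. x/y = x·(y·x) holds. -/
theorem stmt_4 {X : Type*} (mul div : X → X → X)
    (hrq1 : ∀ x y, div (mul x y) y = x) (hrq2 : ∀ x y, mul (div x y) y = x) :
    (∀ p : X × X, (fun q : X × X => (mul q.1 q.2, div q.2 q.1))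
        ((fun q : X × X => (mul q.1 q.2, div q.2 q.1)) p) = p) ↔
    (∀ x y : X, div x y = mul x (mul y x)) := by
  constructor
  · intro h x y
    have h1 : ∀ a b : X, mul (mul a b) (div b a) = a := fun a b =>
      congrArg Prod.fst (h (a, b))
    have key : ∀ a b : X, div a (div b a) = mul a b := by
      intro a b
      have := hrq1 (mul a b) (div b a)
      rw [h1 a b] at this
      exact this
    have := key x (mul y x)
    rwa [hrq1 y x] at this
  · intro hS p
    obtain ⟨x, y⟩ := p
    refine Prod.ext ?_ ?_ <;> simp only
    · rw [hS y x, ← hS (mul x y) y, hrq1]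
    · rw [hS y x, hrq1]
end

section
/- Let A be an abelian group, f an automorphism of A, g an endomorphism of A, and c ∈ A, and let Aff(A,f,g,c) be the affine right quasigroup with operation x·y = f(x) + g(y) + c. Then Aff(A,f,g,c) is an S-right quasigroup if and only if f∘g∘g + f∘f = id, g + f∘g∘f = 0, and f(c) + f(g(c)) + c = 0. -/
/-- The affine right quasigroup Aff(A,f,g,c), with x·y = f(x)+g(y)+c and
x/y = f⁻¹(x−g(y)−c), is an S-right quasigroup iff f∘g∘g + f∘f = id, g + f∘g∘f = 0 and
f(c) + f(g(c)) + c = 0. -/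
theorem stmt_6 {A : Type*} [AddCommGroup A] (f : A ≃+ A) (g : A →+ A) (c : A) :
    (∀ x y : A, f.symm (x - g y - c) = f x + g (f y + g x + c) + c) ↔
    ((∀ a : A, f (g (g a)) + f (f a) = a) ∧ (∀ a : A, g a + f (g (f a)) = 0) ∧
      f c + f (g c) + c = 0) := by
  have key : ∀ x y : A, f.symm (x - g y - c) = f x + g (f y + g x + c) + c ↔
      x - g y - c = f (f x) + f (g (f y)) + f (g (g x)) + f (g c) + f c := by
    intro x y
    rw [show f x + g (f y + g x + c) + c = f.symm (f (f x + g (f y + g x + c) + c)) by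
      rw [f.symm_apply_apply]]
    rw [f.symm.injective.eq_iff]
    constructor <;> intro h <;> [skip; skip] <;>
      · rw [h]; simp only [map_add]; abel
  simp only [key]
  constructor
  · intro h
    have h00 := h 0 0
    simp only [map_zero, zero_sub, sub_zero, zero_add, add_zero] at h00
    have hy0 : ∀ x, x - c = f (f x) + f (g (g x)) + f (g c) + f c := by
      intro x
      have := h x 0
      simpa only [map_zero, sub_zero, zero_add, add_zero] using this
    have hx0 : ∀ y, - g y - c = f (g (f y)) + f (g c) + f c := by
      intro y
      have := h 0 y
      simpa only [map_zero, zero_sub, zero_add, add_zero] using this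
    have hc : f c + f (g c) + c = 0 := by
      have := h00
      -- -c = f (g c) + f c
      linear_combination (norm := abel) -this
    refine ⟨?_, ?_, hc⟩
    · intro a
      have := hy0 a
      have h2 := h00
      linear_combination (norm := abel) -this + h2
    · intro a
      have := hx0 a
      have h2 := h00
      linear_combination (norm := abel) -this + h2
  · rintro ⟨h1, h2, h3⟩ x y
    have e1 := h1 x
    have e2 := h2 y
    have e3 : f (g c) + f c = -c := by linear_combination (norm := abel) h3
    linear_combination (norm := abel) -e1 - e2 - e3
end

section
/- A quandle (Q,*) (with right division /) is an S-right quasigroup if and only if the identity ((x*y)*x)*y = x holds for all x,y ∈ Q. -/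
/-- A quandle (Q,*) with right division / is an S-right quasigroup
(x/y = x*(y*x)) iff ((x*y)*x)*y = x holds for all x,y. -/
theorem stmt_7 {Q : Type*} (star div : Q → Q → Q)
    (hrq1 : ∀ x y, div (star x y) y = x) (hrq2 : ∀ x y, star (div x y) y = x)
    (hidem : ∀ x : Q, star x x = x)
    (hdist : ∀ x y z : Q, star (star x y) z = star (star x z) (star y z)) :
    (∀ x y : Q, div x y = star x (star y x)) ↔
    (∀ x y : Q, star (star (star x y) x) y = x) := by
  have key : ∀ x y : Q, star (star x y) x = star x (star y x) := by
    intro x y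
    rw [hdist, hidem]
  constructor
  · intro h x y
    rw [key, ← h, hrq2]
  · intro h x y
    calc div x y = div (star (star (star x y) x) y) y := by rw [h x y]
      _ = star (star x y) x := hrq1 _ _
      _ = star x (star y x) := key x y
end

section
/- Let G be a group and let Q be its conjugation quandle, i.e., G with operation x*y = y⁻¹xy and right division x/y = yxy⁻¹. Then Q is an S-right quasigroup if and only if x·y² = y²·x for all x,y ∈ G, i.e., every square of an element of G lies in the center of G. -/
/-- The conjugation quandle of a group G (x*y = y⁻¹xy, x/y = yxy⁻¹) is an
S-right quasigroup (x/y = x*(y*x)) iff every square of an element of G is central,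
i.e. x·y² = y²·x for all x,y ∈ G. -/
theorem stmt_8 {G : Type*} [Group G] :
    (∀ x y : G, y * x * y⁻¹ =
      (x⁻¹ * y * x)⁻¹ * x * (x⁻¹ * y * x)) ↔
    (∀ x y : G, x * y ^ 2 = y ^ 2 * x) := by
  constructor
  · intro h x y
    have h1 := h (x⁻¹ * y) x
    have h2 : (x * (x⁻¹ * y)) * (x * (x⁻¹ * y)) = ((x⁻¹ * y) * x) * ((x⁻¹ * y) * x) := by
      have := congrArg (fun z => x * (x⁻¹ * y) * z * x) h1
      simpa [mul_assoc] using this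
    have h3 : y * y = x⁻¹ * (y * (y * x)) := by
      simpa [mul_assoc] using h2
    have := congrArg (fun z => x * z) h3
    simpa [pow_two, mul_assoc] using this
  · intro h x y
    have h1 := h x (y * x)
    have h2 : x * ((y * x) * (y * x)) = ((y * x) * (y * x)) * x := by
      simpa [pow_two, mul_assoc] using h1
    have key : (y * x) * (y * x) = (x * y) * (x * y) := by
      have h3 : (x * y) * (x * y) = x * ((y * x) * (y * x)) * x⁻¹ := by group
      rw [h3, h2]
      simp [mul_assoc]
    have := congrArg (fun z => x⁻¹ * y⁻¹ * z * y⁻¹) key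
    simpa [mul_assoc] using this
end

section
/- Let (X,·,/) be a right quasigroup satisfying the four singquandle identities. Then the operation x*y := (x·y)·y makes (X,*) an involutory quandle; in particular (((x·y)·y)·y)·y = x for all x,y ∈ X, i.e., every right translation R_y : x ↦ x·y satisfies R_y⁴ = id. -/
/-- The operation x*y := (x·y)·y derived from a binary operation ·. -/
def starOp {X : Type*} (mul : X → X → X) (x y : X) : X := mul (mul x y) y

/-- If a right quasigroup (X,·,/) satisfies the four singquandle identities,
then x*y := (x·y)·y makes (X,*) an involutory quandle (right translations bijective,
idempotent, right distributive, involutory); in particular (((x·y)·y)·y)·y = x for all x,y,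
i.e. every right translation R_y satisfies R_y⁴ = id. -/
theorem stmt_12 {X : Type*} (mul div : X → X → X)
    (hrq1 : ∀ x y, div (mul x y) y = x) (hrq2 : ∀ x y, mul (div x y) y = x)
    (h1 : ∀ x y : X, mul (mul x (mul y x)) y = x)
    (h2 : ∀ x : X, mul (mul x x) x = x)
    (h3 : ∀ x y z : X, mul (mul (mul x y) z) z = mul (mul (mul x z) z) (mul (mul y z) z))
    (h4 : ∀ x y z : X, mul (mul (mul (mul x z) z) y) y =
      mul (mul (mul (mul x (mul y z)) (mul y z)) (div z y)) (div z y)) :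
    (∀ y : X, Function.Bijective (fun x => starOp mul x y)) ∧
    (∀ x : X, starOp mul x x = x) ∧
    (∀ x y z : X, starOp mul (starOp mul x y) z = starOp mul (starOp mul x z) (starOp mul y z)) ∧
    (∀ x y : X, starOp mul (starOp mul x y) y = x) ∧
    (∀ x y : X, mul (mul (mul (mul x y) y) y) y = x) := by
  -- right translation by y is injective
  have inj : ∀ y : X, Function.Injective (fun x => mul x y) := by
    intro y a b hab
    have : div (mul a y) y = div (mul b y) y := by simp only at hab; rw [hab]
    rwa [hrq1, hrq1] at this
  -- L1 : x·(y·x) = x/y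
  have L1 : ∀ x y : X, mul x (mul y x) = div x y := by
    intro x y
    apply inj y
    show mul (mul x (mul y x)) y = mul (div x y) y
    rw [h1, hrq2]
  -- L3 : (y·z)·(z/y) = y
  have L3 : ∀ y z : X, mul (mul y z) (div z y) = y := by
    intro y z
    have := h1 y (div z y)
    rwa [hrq2] at this
  -- L4 : (z/y)/(y·z) = z
  have L4 : ∀ y z : X, div (div z y) (mul y z) = z := by
    intro y z
    rw [← L1, L3, hrq2]
  -- L5 (D) : σ_{y·z}(σ_{z/y} x) = σ_z(σ_y x)
  have L5 : ∀ x y z : X,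
      mul (mul (mul (mul x (div z y)) (div z y)) (mul y z)) (mul y z) =
      mul (mul (mul (mul x y) y) z) z := by
    intro x y z
    have := h4 x (mul y z) (div z y)
    rwa [L3, L4] at this
  -- L6 : z/(w/z) = z·w
  have L6 : ∀ z w : X, div z (div w z) = mul z w := by
    intro z w
    rw [← L1, hrq2]
  -- L10 (W) : (z/y)·(y·z)·(y·z) = z·((y·z)·z)
  have L10 : ∀ y z : X,
      mul (mul (div z y) (mul y z)) (mul y z) = mul z (mul (mul y z) z) := by
    intro y z
    have h := L5 (div z y) y z
    rw [h2 (div z y)] at h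
    -- h : σ_{y·z}(z/y) = σ_z (σ_y (z/y))
    rw [hrq2] at h
    -- now RHS is mul (mul (mul z y) z) z ; use h3 and h2
    rw [h3 z y z, h2 z] at h
    exact h
  -- L11 KEY : ((z·w)·w)·w = z·(w·z)
  have L11 : ∀ z w : X, mul (mul (mul z w) w) w = mul z (mul w z) := by
    intro z w
    have h := L10 (div w z) z
    rw [hrq2, L6] at h
    exact h
  -- goal 5 : ρ_y⁴ = id
  have goal5 : ∀ x y : X, mul (mul (mul (mul x y) y) y) y = x := by
    intro x y
    rw [L11 x y, h1]
  refine ⟨?_, ?_, ?_, ?_, goal5⟩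
  · -- bijectivity of star translations
    intro y
    apply Function.bijective_iff_has_inverse.mpr
    refine ⟨fun x => div (div x y) y, ?_, ?_⟩
    · intro x
      simp only [starOp, hrq1]
    · intro x
      simp only [starOp, hrq2]
  · intro x
    simp only [starOp, h2]
  · intro x y z
    simp only [starOp]
    rw [h3 (mul x y) y z, h3 x y z]
  · intro x y
    simp only [starOp]
    exact goal5 x y
end

section
/- Let (X,·,/) be a right quasigroup. Then (X,·,/) satisfies the four singquandle identities if and only if (X,·,/) is an S-right quasigroup (x/y = x·(y·x) for all x,y) and, defining x*y := (x·y)·y, the pair (X,*) is a quandle and (X,·,*) is an oriented singquandle. -/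
/-- A right quasigroup (X,·,/) satisfies the four singquandle identities iff
it is an S-right quasigroup (x/y = x·(y·x)) and, with x*y := (x·y)·y, the pair (X,*) is a
quandle and (X,·,*) is an oriented singquandle. -/
theorem stmt_13 {X : Type*} (mul div : X → X → X)
    (hrq1 : ∀ x y, div (mul x y) y = x) (hrq2 : ∀ x y, mul (div x y) y = x) :
    ((∀ x y : X, mul (mul x (mul y x)) y = x) ∧
     (∀ x : X, mul (mul x x) x = x) ∧
     (∀ x y z : X, mul (mul (mul x y) z) z = mul (mul (mul x z) z) (mul (mul y z) z)) ∧
     (∀ x y z : X, mul (mul (mul (mul x z) z) y) y =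
        mul (mul (mul (mul x (mul y z)) (mul y z)) (div z y)) (div z y))) ↔
    ((∀ x y : X, div x y = mul x (mul y x)) ∧
     -- (X,*) is a quandle:
     (∀ y : X, Function.Bijective (fun x => starOp mul x y)) ∧
     (∀ x : X, starOp mul x x = x) ∧
     (∀ x y z : X, starOp mul (starOp mul x y) z
        = starOp mul (starOp mul x z) (starOp mul y z)) ∧
     -- (X,·,*) is an oriented singquandle:
     (∀ x y z : X, starOp mul (mul y x) z = mul (starOp mul y z) (starOp mul x z)) ∧
     (∀ x y z : X, starOp mul (mul x (mul y x)) z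
        = mul (starOp mul x z) (mul (starOp mul y z) (starOp mul x z))) ∧
     (∀ x y z : X, starOp mul (starOp mul y x) z
        = starOp mul (starOp mul y (mul z x)) (mul x (mul z x))) ∧
     (∀ x y : X, starOp mul (mul y x) (mul (starOp mul x y) y)
        = mul (starOp mul y (starOp mul x y)) (starOp mul x y))) := by
  constructor
  · rintro ⟨h1, h2, h3, h4⟩
    -- the S-identity
    have hS : ∀ x y : X, div x y = mul x (mul y x) := by
      intro x y
      have := congrArg (fun t => div t y) (h1 x y)
      simpa [hrq1] using this.symm
    -- right translations by (·z)·z are injective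
    have hinj : ∀ (w a b : X), mul (mul a w) w = mul (mul b w) w → a = b := by
      intro w a b h
      have := congrArg (fun s => div (div s w) w) h
      simpa [hrq1] using this
    refine ⟨hS, ?_, ?_, ?_, ?_, ?_, ?_, ?_⟩
    · -- bijectivity
      intro y
      refine Function.bijective_iff_has_inverse.mpr
        ⟨fun x => div (div x y) y, ?_, ?_⟩
      · intro x; simp [starOp, hrq1]
      · intro x; simp [starOp, hrq2]
    · -- idempotence
      intro x; simpa [starOp] using h2 x
    · -- quandle self-distributivity
      intro x y z
      simp only [starOp]
      rw [h3 (mul x y) y z, h3 x y z]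
    · -- oriented axiom 1
      intro x y z
      simpa [starOp] using h3 y x z
    · -- oriented axiom 2
      intro x y z
      simp only [starOp]
      rw [← hS x y, ← hS (mul (mul x z) z) (mul (mul y z) z)]
      have hx := h3 (div x y) y z
      rw [hrq2] at hx
      rw [hx, hrq1]
    · -- oriented axiom 3
      intro x y z
      simp only [starOp]
      rw [← hS x z]
      exact h4 y z x
    · -- oriented axiom 4
      intro x y
      simp only [starOp]
      set c := mul (mul x y) y with hc
      set e := mul c y with he
      set d := div y c with hd
      set t := div e d with ht
      have f3 : d = mul y e := by rw [hd, hS y c, ← he]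
      have f4 : mul e d = c := by
        rw [f3, he, ← hS (mul c y) y]
        exact hrq1 c y
      have fA : mul (mul y e) e = mul d e := by rw [← f3]
      have h4xc := h4 x c y
      rw [← hc, ← he, ← hd] at h4xc
      rw [h2 c] at h4xc
      have fB : mul (mul t d) d = c := by
        rw [ht, hrq2]; exact f4
      have hSex : mul (mul x e) e = t := hinj d _ _ (h4xc.symm.trans fB.symm)
      have keyC : mul (mul d e) t = d := by
        rw [ht, hS e d, ← hS (mul d e) e]
        exact hrq1 d e
      have h4yc := h4 y c y
      rw [← he, ← hd, h2 y, ← f3] at h4yc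
      rw [h3 y x e, fA, hSex, h4yc, ← fB, ← h3 (mul d e) t d, keyC, h2]
  · rintro ⟨hS, hbij, hidem, hqdist, ho1, ho2, ho3, ho4⟩
    refine ⟨?_, ?_, ?_, ?_⟩
    · intro x y
      rw [← hS x y]; exact hrq2 x y
    · intro x; simpa [starOp] using hidem x
    · intro x y z; simpa [starOp] using ho1 y x z
    · intro x y z
      have h := ho3 z x y
      rw [← hS z y] at h
      simpa [starOp] using h
end

section
/- Let (X,·,/) be a right quasigroup satisfying the identities x/y = x·(y·x) and (x·x)·x = x for all x,y. Then (x·x)·(x·x) = x for all x ∈ X; that is, the squaring map σ : x ↦ x·x is an involution (in particular σ is bijective, so X is 2-divisible). In particular, every singquandle is 2-divisible with involutive squaring map. -/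
/-- If a right quasigroup (X,·,/) satisfies x/y = x·(y·x) and (x·x)·x = x,
then (x·x)·(x·x) = x for all x, i.e. the squaring map σ : x ↦ x·x is an involution
(in particular σ is bijective, so X is 2-divisible). In particular every singquandle is
2-divisible with involutive squaring map. -/
theorem stmt_14 {X : Type*} (mul div : X → X → X)
    (hrq1 : ∀ x y, div (mul x y) y = x) (hrq2 : ∀ x y, mul (div x y) y = x)
    (hS : ∀ x y : X, div x y = mul x (mul y x))
    (hI : ∀ x : X, mul (mul x x) x = x) :
    (∀ x : X, mul (mul x x) (mul x x) = x) ∧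
    Function.Involutive (fun x : X => mul x x) ∧
    Function.Bijective (fun x : X => mul x x) := by
  have key : ∀ x : X, mul (mul x x) (mul x x) = x := by
    intro x
    have h := hrq2 x (mul x x)
    rw [hS, hI] at h
    exact h
  refine ⟨key, key, (Function.Involutive.bijective key)⟩
end

section
/- Let (X,·,/) be a right quasigroup satisfying the four singquandle identities (so (X,·,/) is a singquandle). Then (X,/,·) — the right quasigroup obtained by interchanging the operation and the right division — also satisfies the four singquandle identities, i.e., (X,/,·) is a singquandle. -/
/-- If a right quasigroup (X,·,/) satisfies the four singquandle identities,
then so does (X,/,·), the right quasigroup obtained by interchanging the operation and the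
right division. -/
theorem stmt_15 {X : Type*} (mul div : X → X → X)
    (hrq1 : ∀ x y, div (mul x y) y = x) (hrq2 : ∀ x y, mul (div x y) y = x)
    (h1 : ∀ x y : X, mul (mul x (mul y x)) y = x)
    (h2 : ∀ x : X, mul (mul x x) x = x)
    (h3 : ∀ x y z : X, mul (mul (mul x y) z) z = mul (mul (mul x z) z) (mul (mul y z) z))
    (h4 : ∀ x y z : X, mul (mul (mul (mul x z) z) y) y =
      mul (mul (mul (mul x (mul y z)) (mul y z)) (div z y)) (div z y)) :
    (∀ x y : X, div (div x (div y x)) y = x) ∧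
    (∀ x : X, div (div x x) x = x) ∧
    (∀ x y z : X, div (div (div x y) z) z = div (div (div x z) z) (div (div y z) z)) ∧
    (∀ x y z : X, div (div (div (div x z) z) y) y =
      div (div (div (div x (div y z)) (div y z)) (mul z y)) (mul z y)) := by
  have claimA : ∀ a b : X, mul a (mul b a) = div a b := by
    intro a b
    calc mul a (mul b a) = div (mul (mul a (mul b a)) b) b := (hrq1 _ _).symm
    _ = div a b := by rw [h1]
  refine ⟨?_, ?_, ?_, ?_⟩
  · intro x y
    have hd : div y x = mul y (mul x y) := (claimA y x).symm
    have key : mul (mul x y) (div y x) = x := by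
      rw [hd, claimA (mul x y) y, hrq1]
    have h5 : div x (div y x) = mul x y := by
      calc div x (div y x) = div (mul (mul x y) (div y x)) (div y x) := by rw [key]
      _ = mul x y := hrq1 _ _
    rw [h5, hrq1]
  · intro x
    have hxx : div x x = mul x x := by
      calc div x x = div (mul (mul x x) x) x := by rw [h2]
      _ = mul x x := hrq1 _ _
    rw [hxx, hrq1]
  · intro x y z
    set u := div (div x z) z with hu
    set v := div (div y z) z with hv
    have hx : mul (mul u z) z = x := by rw [hu, hrq2, hrq2]
    have hy : mul (mul v z) z = y := by rw [hv, hrq2, hrq2]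
    have e := h3 (div u v) v z
    rw [hrq2, hx, hy] at e
    -- e : x = mul (mul (mul (div u v) z) z) y
    have e2 : div x y = mul (mul (div u v) z) z := by rw [e, hrq1]
    rw [e2, hrq1, hrq1]
  · intro x y z
    set u := div (div (div (div x z) z) y) y with hu
    have h5 : mul (mul (mul (mul u y) y) z) z = x := by
      rw [hu, hrq2, hrq2, hrq2, hrq2]
    have h6 := h4 u z y
    rw [h5] at h6
    have h7 : div (div x (div y z)) (div y z) = mul (mul u (mul z y)) (mul z y) := by
      rw [h6, hrq1, hrq1]
    rw [h7, hrq1, hrq1]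
end

section
/- Let A be an abelian group, f an automorphism of A, g an endomorphism of A, c ∈ A, and let Aff(A,f,g,c) be the affine right quasigroup with operation x·y = f(x) + g(y) + c. Then Aff(A,f,g,c) is a singquandle (satisfies the four singquandle identities) if and only if: f∘g∘g + f∘f = id, g + f∘g∘f = 0, f⁴ = id, g + f∘g = id − f∘f, f(c) + c = 0, and g(c) = 0. -/
/-- The affine right quasigroup Aff(A,f,g,c) (x·y = f(x)+g(y)+c, right division
x/y = f⁻¹(x−g(y)−c)) is a singquandle iff f∘g∘g + f∘f = id, g + f∘g∘f = 0, f⁴ = id,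
g + f∘g = id − f∘f, f(c) + c = 0 and g(c) = 0. -/
theorem stmt_17 {A : Type*} [AddCommGroup A] (f : A ≃+ A) (g : A →+ A) (c : A)
    (mul : A → A → A) (div : A → A → A)
    (hmul : ∀ x y : A, mul x y = f x + g y + c)
    (hdiv : ∀ x y : A, div x y = f.symm (x - g y - c)) :
    ((∀ x y : A, mul (mul x (mul y x)) y = x) ∧
     (∀ x : A, mul (mul x x) x = x) ∧
     (∀ x y z : A, mul (mul (mul x y) z) z = mul (mul (mul x z) z) (mul (mul y z) z)) ∧
     (∀ x y z : A, mul (mul (mul (mul x z) z) y) y =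
        mul (mul (mul (mul x (mul y z)) (mul y z)) (div z y)) (div z y))) ↔
    ((∀ a : A, f (g (g a)) + f (f a) = a) ∧
     (∀ a : A, g a + f (g (f a)) = 0) ∧
     (∀ a : A, f (f (f (f a))) = a) ∧
     (∀ a : A, g a + f (g a) = a - f (f a)) ∧
     f c + c = 0 ∧ g c = 0) := by
  constructor
  · rintro ⟨l1, l2, -, -⟩
    have hz1 : f (0:A) = 0 := map_zero f
    have hz2 : g (0:A) = 0 := map_zero g
    have key2 : ∀ x : A, f (f x) + f (g x) + f c + g x + c = x := by
      intro x
      have h := l2 x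
      simp only [hmul, map_add] at h
      linear_combination (norm := abel1) h
    have key : ∀ x y : A,
        f (f x) + f (g (f y)) + f (g (g x)) + f (g c) + f c + g y + c = x := by
      intro x y
      have h := l1 x y
      simp only [hmul, map_add] at h
      linear_combination (norm := abel1) h
    have h5' : f c + c = 0 := by
      have h := key2 0
      linear_combination (norm := abel1) h - congrArg f hz1 - congrArg f hz2
        - (2:ℤ) • hz1 - hz2
    have hgc0 : f (g c) + f c + c = 0 := by
      have h := key 0 0
      linear_combination (norm := abel1) h - congrArg f hz1 - (3:ℤ) • hz1
        - congrArg f (congrArg g hz1) - (2:ℤ) • congrArg f hz2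
        - congrArg f (congrArg g hz2) - hz2
    have hgc : g c = 0 := by
      apply f.injective
      rw [map_zero]
      linear_combination (norm := abel1) hgc0 - h5'
    have R2 : ∀ a : A, g a + f (g (f a)) = 0 := by
      intro a
      have h := key 0 a
      linear_combination (norm := abel1) h - congrArg f hz1
        - congrArg f (congrArg g hz2) - congrArg f hz2 - congrArg f hgc
        - (3:ℤ) • hz1 - h5'
    have R1 : ∀ a : A, f (g (g a)) + f (f a) = a := by
      intro a
      have h := key a 0
      linear_combination (norm := abel1) h - congrArg f (congrArg g hz1)
        - congrArg f hz2 - congrArg f hgc - (2:ℤ) • hz1 - hz2 - h5'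
    have R4 : ∀ a : A, g a + f (g a) = a - f (f a) := by
      intro a
      have h := key2 a
      linear_combination (norm := abel1) h - h5'
    have hP : ∀ b : A, g (g b) = f.symm b - f b := by
      intro b
      have h := congrArg f.symm (R1 b)
      rw [map_add, f.symm_apply_apply, f.symm_apply_apply] at h
      linear_combination (norm := abel1) h
    have hS : ∀ b : A, f.symm (g b) = f.symm b - f b - g b := by
      intro b
      have h := congrArg f.symm (R4 b)
      rw [map_add, map_sub, f.symm_apply_apply, f.symm_apply_apply] at h
      linear_combination (norm := abel1) h
    have R3 : ∀ a : A, f (f (f (f a))) = a := by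
      intro a
      have eR4 := R4 (f (f a))
      have eR2f := R2 (f a)
      have eP : g (g (f a)) = a - f (f a) := by
        have h := hP (f a); rwa [f.symm_apply_apply] at h
      have eB : g (g (g (f a))) = g a - g (f (f a)) := by
        have h := congrArg g eP; rwa [map_sub] at h
      have eC := hP (g (f a))
      have eS : f.symm (g (f a)) = a - f (f a) - g (f a) := by
        have h := hS (f a); rwa [f.symm_apply_apply] at h
      have e2a := R2 a
      linear_combination (norm := abel1) eR4 - eR2f - eB + eC + eS - e2a
    exact ⟨R1, R2, R3, R4, h5', hgc⟩
  · rintro ⟨h1, h2, h3, h4, h5, h6⟩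
    have hfc : f c = -c := by linear_combination (norm := abel1) h5
    have hsymm : ∀ a : A, f.symm a = f (f (f a)) := by
      intro a
      apply f.injective
      rw [f.apply_symm_apply]
      exact (h3 a).symm
    have hgf : ∀ a : A, g (f a) = g a + f a - f (f (f a)) := by
      intro a
      linear_combination (norm := abel1) h4 (f a) - h2 a
    have hgg : ∀ a : A, g (g a) = f (f (f a)) - f a := by
      intro a
      apply f.injective
      rw [map_sub]
      linear_combination (norm := abel1) h1 a - h3 a
    have hfg : ∀ a : A, f (g a) = a - f (f a) - g a := by
      intro a
      linear_combination (norm := abel1) h4 a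
    refine ⟨?_, ?_, ?_, ?_⟩ <;> intros <;>
      simp only [hmul, hdiv, hsymm, map_add, map_sub, map_neg, map_zero,
        hgf, hgg, hfg, hfc, h6, h3] <;>
      abel
end

section
/- Let A be an abelian group, f an automorphism of A, g an endomorphism of A, c ∈ A, and let Aff(A,f,g,c) be the affine right quasigroup with operation x·y = f(x) + g(y) + c. Then Aff(A,f,g,c) is a singquandle (satisfies the four singquandle identities) if and only if the three identities x/y = x·(y·x), (x·x)·x = x, and (((x·y)·y)·y)·y = x hold for all x,y. -/
section AffineSingquandleAux

variable {A : Type*} [AddCommGroup A]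

/-- All seven singquandle-related identities for the affine right quasigroup follow
from the core relations on `f`, `g`, `c`. -/
theorem aff_aux_stmt18 (f : A ≃+ A) (g : A →+ A) (c : A)
    (mul : A → A → A) (div : A → A → A)
    (hmul : ∀ x y : A, mul x y = f x + g y + c)
    (hdiv : ∀ x y : A, div x y = f.symm (x - g y - c))
    (e2c : f c = -c) (gc0 : g c = 0)
    (e1x : ∀ x, f (g (g x)) = x - f (f x))
    (e1y : ∀ y, f (g (f y)) = -(g y))
    (e2x : ∀ x, f (g x) = x - f (f x) - g x)
    (e4 : ∀ x, f (f (f (f x))) = x) :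
    (∀ x y : A, mul (mul x (mul y x)) y = x) ∧
    (∀ x : A, mul (mul x x) x = x) ∧
    (∀ x y z : A, mul (mul (mul x y) z) z = mul (mul (mul x z) z) (mul (mul y z) z)) ∧
    (∀ x y z : A, mul (mul (mul (mul x z) z) y) y =
        mul (mul (mul (mul x (mul y z)) (mul y z)) (div z y)) (div z y)) ∧
    (∀ x y : A, div x y = mul x (mul y x)) ∧
    (∀ x y : A, mul (mul (mul (mul x y) y) y) y = x) := by
  have fsymm3 : ∀ t, f.symm t = f (f (f t)) := by
    intro t; apply f.injective; rw [AddEquiv.apply_symm_apply, e4]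
  have s2 : ∀ y, g (f y) = -(f.symm (g y)) := by
    intro y
    have t := congrArg f.symm (e1y y)
    simpa only [AddEquiv.symm_apply_apply, map_neg] using t
  have s3' : ∀ x, g (g x) = f.symm x - f x := by
    intro x
    have t := congrArg f.symm (e1x x)
    simpa only [AddEquiv.symm_apply_apply, map_sub] using t
  have s2N : ∀ t, g (f t) = -(f (f (f (g t)))) := by intro t; rw [s2, fsymm3]
  have s3N : ∀ t, g (g t) = f (f (f t)) - f t := by intro t; rw [s3', fsymm3]
  refine ⟨?_, ?_, ?_, ?_, ?_, ?_⟩ <;>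
    · intros
      simp only [hmul, hdiv, map_add, map_sub, map_neg, e4, fsymm3, s2N, s3N, e2x, gc0, e2c,
        map_zero]
      abel

/-- Extraction of the core relations from the first three singquandle axioms. -/
theorem aff_fwd_stmt18 (f : A ≃+ A) (g : A →+ A) (c : A)
    (h1 : ∀ x y : A, f (f x) + (f (g (f y)) + f (g (g x)) + f (g c)) + f c + g y + c = x)
    (h2 : ∀ x : A, f (f x) + f (g x) + f c + g x + c = x)
    (h3 : ∀ x y z : A,
      f (f (f x)) + f (f (g y)) + f (f c) + f (g z) + f c + g z + c =
      f (f (f x)) + f (f (g z)) + f (f c) + f (g z) + f c +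
        (g (f (f y)) + g (f (g z)) + g (f c) + g (g z) + g c) + c) :
    (f c = -c) ∧ (g c = 0) ∧ (∀ x, f (g (g x)) = x - f (f x)) ∧
    (∀ y, f (g (f y)) = -(g y)) ∧ (∀ x, f (g x) = x - f (f x) - g x) ∧
    (∀ x, f (f (f (f x))) = x) := by
  have e2c : f c = -c := by
    have t := h2 0
    simp only [map_zero, zero_add, add_zero] at t
    linear_combination (norm := abel) t
  have gc0 : g c = 0 := by
    have t := h1 0 0
    simp only [map_zero, zero_add, add_zero] at t
    have t2 : f (g c) = f 0 := by
      rw [map_zero]; linear_combination (norm := abel) t - e2c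
    exact f.injective t2
  have fgc0 : f (g c) = 0 := by rw [gc0, map_zero]
  have e1y : ∀ y, f (g (f y)) = -(g y) := by
    intro y
    have t := h1 0 y
    simp only [map_zero, zero_add, add_zero] at t
    linear_combination (norm := abel) t - fgc0 - e2c
  have e1x : ∀ x, f (g (g x)) = x - f (f x) := by
    intro x
    have t := h1 x 0
    simp only [map_zero, zero_add, add_zero] at t
    linear_combination (norm := abel) t - fgc0 - e2c
  have e2x : ∀ x, f (g x) = x - f (f x) - g x := by
    intro x
    linear_combination (norm := abel) (h2 x) - e2c
  have gfc0 : g (f c) = 0 := by rw [e2c, map_neg, gc0, neg_zero]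
  have e3y : ∀ y, f (f (g y)) = g (f (f y)) := by
    intro y
    have t := h3 0 y 0
    simp only [map_zero, zero_add, add_zero] at t
    linear_combination (norm := abel) t + gfc0 + gc0
  have s2 : ∀ y, g (f y) = -(f.symm (g y)) := by
    intro y
    have t := congrArg f.symm (e1y y)
    simpa only [AddEquiv.symm_apply_apply, map_neg] using t
  have sE : ∀ x, g x = f.symm x - f x - f.symm (g x) := by
    intro x
    have t := congrArg f.symm (e2x x)
    simpa only [AddEquiv.symm_apply_apply, map_sub] using t
  have s3' : ∀ x, g (g x) = f.symm x - f x := by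
    intro x
    have t := congrArg f.symm (e1x x)
    simpa only [AddEquiv.symm_apply_apply, map_sub] using t
  have s3'' : ∀ x, g (g x) = g x - g (f x) := by
    intro x
    linear_combination (norm := abel) (s3' x) - (sE x) + (s2 x)
  have s4 : ∀ x, g (f x) - f (f (g x)) = x - f (f x) := by
    intro x
    linear_combination (norm := abel) (e1x x) - (e2x (g x)) + (s3'' x)
  have gf3 : ∀ x, g (f (f (f x))) = -(f (g x)) := by
    intro x
    have t := s2 (f (f x))
    rw [← e3y x] at t
    simpa only [AddEquiv.symm_apply_apply] using t
  have gf4 : ∀ x, g (f (f (f (f x)))) = g x := by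
    intro x
    have t := s2 (f (f (f x)))
    rw [gf3 x] at t
    simpa only [map_neg, neg_neg, AddEquiv.symm_apply_apply] using t
  have ffgff : ∀ x, f (f (g (f (f x)))) = g x := fun x => (e3y (f (f x))).trans (gf4 x)
  have e4 : ∀ x, f (f (f (f x))) = x := by
    intro x
    linear_combination (norm := abel) (s4 (f (f x))) - (gf3 x) + (ffgff x) + (e2x x)
  exact ⟨e2c, gc0, e1x, e1y, e2x, e4⟩

/-- Extraction of the core relations from the three alternative identities. -/
theorem aff_rev_stmt18 (f : A ≃+ A) (g : A →+ A) (c : A)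
    (hA' : ∀ x y : A, x - g y - c = f (f x) + (f (g (f y)) + f (g (g x)) + f (g c)) + f c)
    (hB : ∀ x : A, f (f x) + f (g x) + f c + g x + c = x)
    (hC : ∀ x y : A, f (f (f (f x))) + f (f (f (g y))) + f (f (f c)) + f (f (g y)) + f (f c) +
        f (g y) + f c + g y + c = x) :
    (f c = -c) ∧ (g c = 0) ∧ (∀ x, f (g (g x)) = x - f (f x)) ∧
    (∀ y, f (g (f y)) = -(g y)) ∧ (∀ x, f (g x) = x - f (f x) - g x) ∧
    (∀ x, f (f (f (f x))) = x) := by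
  have e2c : f c = -c := by
    have t := hB 0
    simp only [map_zero, zero_add, add_zero] at t
    linear_combination (norm := abel) t
  have e2x : ∀ x, f (g x) = x - f (f x) - g x := by
    intro x
    linear_combination (norm := abel) (hB x) - e2c
  have gc0 : g c = 0 := by
    have t := hA' 0 0
    simp only [map_zero, zero_add, add_zero, zero_sub, sub_zero] at t
    have t2 : f (g c) = f 0 := by
      rw [map_zero]; linear_combination (norm := abel) -t - e2c
    exact f.injective t2
  have fgc0 : f (g c) = 0 := by rw [gc0, map_zero]
  have e1y : ∀ y, f (g (f y)) = -(g y) := by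
    intro y
    have t := hA' 0 y
    simp only [map_zero, zero_add, add_zero, zero_sub, sub_zero] at t
    linear_combination (norm := abel) -t - fgc0 - e2c
  have e1x : ∀ x, f (g (g x)) = x - f (f x) := by
    intro x
    have t := hA' x 0
    simp only [map_zero, zero_add, add_zero, zero_sub, sub_zero] at t
    linear_combination (norm := abel) -t - fgc0 - e2c
  have fc2 : f (f c) = c := by rw [e2c, map_neg, e2c, neg_neg]
  have fc3 : f (f (f c)) = -c := by rw [fc2, e2c]
  have e4 : ∀ x, f (f (f (f x))) = x := by
    intro x
    have t := hC x 0
    simp only [map_zero, zero_add, add_zero] at t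
    linear_combination (norm := abel) t - fc3 - fc2 - e2c
  exact ⟨e2c, gc0, e1x, e1y, e2x, e4⟩

end AffineSingquandleAux

/-- The affine right quasigroup Aff(A,f,g,c) (x·y = f(x)+g(y)+c, right division
x/y = f⁻¹(x−g(y)−c)) is a singquandle iff the identities x/y = x·(y·x), (x·x)·x = x and
(((x·y)·y)·y)·y = x hold for all x,y. -/
theorem stmt_18 {A : Type*} [AddCommGroup A] (f : A ≃+ A) (g : A →+ A) (c : A)
    (mul : A → A → A) (div : A → A → A)
    (hmul : ∀ x y : A, mul x y = f x + g y + c)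
    (hdiv : ∀ x y : A, div x y = f.symm (x - g y - c)) :
    ((∀ x y : A, mul (mul x (mul y x)) y = x) ∧
     (∀ x : A, mul (mul x x) x = x) ∧
     (∀ x y z : A, mul (mul (mul x y) z) z = mul (mul (mul x z) z) (mul (mul y z) z)) ∧
     (∀ x y z : A, mul (mul (mul (mul x z) z) y) y =
        mul (mul (mul (mul x (mul y z)) (mul y z)) (div z y)) (div z y))) ↔
    ((∀ x y : A, div x y = mul x (mul y x)) ∧
     (∀ x : A, mul (mul x x) x = x) ∧
     (∀ x y : A, mul (mul (mul (mul x y) y) y) y = x)) := by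
  constructor
  · rintro ⟨h1, h2, h3, -⟩
    simp only [hmul, hdiv, map_add, map_sub, map_neg] at h1 h2 h3
    obtain ⟨e2c, gc0, e1x, e1y, e2x, e4⟩ := aff_fwd_stmt18 f g c h1 h2 h3
    obtain ⟨-, -, -, -, hA, hC⟩ :=
      aff_aux_stmt18 f g c mul div hmul hdiv e2c gc0 e1x e1y e2x e4
    obtain ⟨-, hB, -, -, -, -⟩ :=
      aff_aux_stmt18 f g c mul div hmul hdiv e2c gc0 e1x e1y e2x e4
    exact ⟨hA, hB, hC⟩
  · rintro ⟨hA, hB, hC⟩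
    simp only [hmul, hdiv, map_add, map_sub, map_neg] at hA hB hC
    have hA' := fun x y => congrArg f (hA x y)
    simp only [map_add, map_sub, map_neg, AddEquiv.apply_symm_apply] at hA'
    obtain ⟨e2c, gc0, e1x, e1y, e2x, e4⟩ := aff_rev_stmt18 f g c hA' hB hC
    obtain ⟨g1, g2, g3, g4, -, -⟩ :=
      aff_aux_stmt18 f g c mul div hmul hdiv e2c gc0 e1x e1y e2x e4
    exact ⟨g1, g2, g3, g4⟩
end

section
/- Let A be an abelian group, f an automorphism of A, g an endomorphism of A, c ∈ A, and let Aff(A,f,g,c) be the affine right quasigroup with operation x·y = f(x) + g(y) + c. Then the following are equivalent: (a) Aff(A,f,g,c) is an idempotent singquandle (it satisfies the four singquandle identities and x·x = x for all x); (b) the identities x·x = x and ((x·y)·x)·y = x hold for all x,y; (c) g = id − f, (id − f)∘(id + f∘f) = 0, and c = 0. -/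
/-- For the affine right quasigroup Aff(A,f,g,c) (x·y = f(x)+g(y)+c, right
division x/y = f⁻¹(x−g(y)−c)) the following are equivalent:
(a) it is an idempotent singquandle (four singquandle identities plus x·x = x);
(b) x·x = x and ((x·y)·x)·y = x hold for all x,y;
(c) g = id − f, (id − f)∘(id + f∘f) = 0 and c = 0. -/
theorem stmt_19 {A : Type*} [AddCommGroup A] (f : A ≃+ A) (g : A →+ A) (c : A)
    (mul : A → A → A) (div : A → A → A)
    (hmul : ∀ x y : A, mul x y = f x + g y + c)
    (hdiv : ∀ x y : A, div x y = f.symm (x - g y - c)) :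
    ((((∀ x y : A, mul (mul x (mul y x)) y = x) ∧
       (∀ x : A, mul (mul x x) x = x) ∧
       (∀ x y z : A, mul (mul (mul x y) z) z = mul (mul (mul x z) z) (mul (mul y z) z)) ∧
       (∀ x y z : A, mul (mul (mul (mul x z) z) y) y =
          mul (mul (mul (mul x (mul y z)) (mul y z)) (div z y)) (div z y)) ∧
       (∀ x : A, mul x x = x)) ↔
      ((∀ x : A, mul x x = x) ∧ (∀ x y : A, mul (mul (mul x y) x) y = x)))) ∧
    (((∀ x : A, mul x x = x) ∧ (∀ x y : A, mul (mul (mul x y) x) y = x)) ↔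
      ((∀ a : A, g a = a - f a) ∧
       (∀ a : A, (a + f (f a)) - f (a + f (f a)) = 0) ∧
       c = 0)) := by
  -- idempotency forces c = 0 and g = id - f
  have idemC : (∀ x : A, mul x x = x) → c = 0 ∧ ∀ a, g a = a - f a := by
    intro hid
    have hc : c = 0 := by have := hid 0; simpa [hmul] using this
    refine ⟨hc, fun a => ?_⟩
    have := hid a; rw [hmul, hc, add_zero] at this
    linear_combination (norm := module) this
  -- under condition (c), everything holds
  have CtoAll : (∀ a, g a = a - f a) → (∀ a : A, (a + f (f a)) - f (a + f (f a)) = 0) →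
      c = 0 →
      (∀ x y : A, mul (mul x (mul y x)) y = x) ∧
      (∀ x : A, mul x x = x) ∧
      (∀ x y : A, mul (mul (mul x y) x) y = x) ∧
      (∀ x y z : A, mul (mul (mul x y) z) z = mul (mul (mul x z) z) (mul (mul y z) z)) ∧
      (∀ x y z : A, mul (mul (mul (mul x z) z) y) y =
          mul (mul (mul (mul x (mul y z)) (mul y z)) (div z y)) (div z y)) := by
    intro hg hK hc
    have k3 : ∀ a, f (f (f a)) = a + f (f a) - f a := by
      intro a
      have := hK a; simp only [map_add] at this
      linear_combination (norm := module) -this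
    have k4 : ∀ a, f (f (f (f a))) = a := by
      intro a
      calc f (f (f (f a))) = f a + f (f (f a)) - f (f a) := k3 (f a)
        _ = f a + (a + f (f a) - f a) - f (f a) := by rw [k3 a]
        _ = a := by abel
    have hsymm : ∀ a, f.symm a = f (f (f a)) := by
      intro a
      calc f.symm a = f.symm (f (f (f (f a)))) := by rw [k4]
        _ = f (f (f a)) := f.symm_apply_apply _
    refine ⟨fun x y => ?_, fun x => ?_, fun x y => ?_, fun x y z => ?_, fun x y z => ?_⟩ <;>
      simp only [hmul, hdiv, hg, hc, hsymm, map_add, map_sub, map_zero, add_zero,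
        sub_zero, k4, k3] <;> abel
  -- from idempotency and the identity ((x·y)·x)·y = x, derive the cubic condition
  have b2toK : c = 0 → (∀ a, g a = a - f a) → (∀ x y : A, mul (mul (mul x y) x) y = x) →
      ∀ a : A, (a + f (f a)) - f (a + f (f a)) = 0 := by
    intro hc hg hb2 a
    have h := hb2 a 0
    simp only [hmul, hg, hc, map_add, map_sub, map_zero, add_zero, sub_zero, zero_sub,
      map_neg] at h
    simp only [map_add]
    linear_combination (norm := module) -h
  -- from idempotency and the identity (x·(y·x))·y = x, derive the cubic condition
  have a1toK : c = 0 → (∀ a, g a = a - f a) → (∀ x y : A, mul (mul x (mul y x)) y = x) →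
      ∀ a : A, (a + f (f a)) - f (a + f (f a)) = 0 := by
    intro hc hg ha1 a
    have h := ha1 a 0
    simp only [hmul, hg, hc, map_add, map_sub, map_zero, add_zero, sub_zero, zero_sub,
      map_neg] at h
    simp only [map_add]
    linear_combination (norm := module) -h
  constructor
  · constructor
    · rintro ⟨h1, -, -, -, h5⟩
      obtain ⟨hc, hg⟩ := idemC h5
      obtain ⟨-, hidem, hb2, -, -⟩ := CtoAll hg (a1toK hc hg h1) hc
      exact ⟨hidem, hb2⟩
    · rintro ⟨h5, hb2⟩
      obtain ⟨hc, hg⟩ := idemC h5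
      obtain ⟨ha1, hidem, hb2', ha3, ha4⟩ := CtoAll hg (b2toK hc hg hb2) hc
      exact ⟨ha1, fun x => by rw [hidem x, hidem x], ha3, ha4, hidem⟩
  · constructor
    · rintro ⟨h5, hb2⟩
      obtain ⟨hc, hg⟩ := idemC h5
      exact ⟨hg, b2toK hc hg hb2, hc⟩
    · rintro ⟨hg, hK, hc⟩
      obtain ⟨-, hidem, hb2, -, -⟩ := CtoAll hg hK hc
      exact ⟨hidem, hb2⟩
end
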